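/- arXiv:1906.01011 — 3 statements merged into one kernel-verified Lean document; each statement's English description precedes it below -/
import Mathlib

section
/- For the globular coalgebra structure maps on the chains of a globular set, in the case 0 < k = n: ∂(Δ_k x) − (−1)^k Δ_k(∂x) = (1 + (−1)^k T) Δ_{k−1}(x), where x has degree n, Δ_n(x) = x ⊗ x, Δ_{n−1}(x) = t_{n−1}x ⊗ x + (−1)^{(n+1)(n−1)} x ⊗ s_{n−1}x, ∂x = t_{n−1}x − s_{n−1}x, and T is the signed transposition of tensor factors. -/
open TensorProduct

/-- The canonical `Zero` instance on tensor products (stated explicitly to help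
instance synthesis for tensor squares of `Finsupp` modules). -/
noncomputable instance tensorZero {R M N : Type} [CommRing R] [AddCommGroup M]
    [AddCommGroup N] [Module R M] [Module R N] : Zero (TensorProduct R M N) :=
  (inferInstance : AddCommMonoid (TensorProduct R M N)).toZero

/-- A globular set: sets `X n` with source, target and identity (reflexivity) maps
satisfying the globular relations. -/
structure GlobularSet where
  X : ℕ → Type
  s : ∀ n, X (n+1) → X n
  t : ∀ n, X (n+1) → X n
  i : ∀ n, X n → X (n+1)
  glob_tt : ∀ n (x : X (n+2)), t n (t (n+1) x) = t n (s (n+1) x)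
  glob_ss : ∀ n (x : X (n+2)), s n (s (n+1) x) = s n (t (n+1) x)
  t_i : ∀ n (x : X n), t n (i n x) = x
  s_i : ∀ n (x : X n), s n (i n x) = x

namespace GlobularSet

variable (G : GlobularSet)

/-- Iterated target map `X (n + j) → X n`. -/
def tdown : ∀ (j : ℕ) {n : ℕ}, G.X (n + j) → G.X n
  | 0, _, x => x
  | j+1, n, x => tdown j (G.t (n + j) x)

/-- Iterated source map `X (n + j) → X n`. -/
def sdown : ∀ (j : ℕ) {n : ℕ}, G.X (n + j) → G.X n
  | 0, _, x => x
  | j+1, n, x => sdown j (G.s (n + j) x)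

/-- The target map `t_k : X n → X k` for `k ≤ n`. -/
def tgt (k : ℕ) {n : ℕ} (h : k ≤ n) (x : G.X n) : G.X k :=
  G.tdown (n - k) (cast (congrArg G.X (Nat.add_sub_cancel' h).symm) x)

/-- The source map `s_k : X n → X k` for `k ≤ n`. -/
def src (k : ℕ) {n : ℕ} (h : k ≤ n) (x : G.X n) : G.X k :=
  G.sdown (n - k) (cast (congrArg G.X (Nat.add_sub_cancel' h).symm) x)

variable (R : Type) [CommRing R]

/-- The total module of `R`-chains of a globular set (free on all cells; the
degenerate cells span the subspace one quotients by). -/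
abbrev Chains := (Σ n, G.X n) →₀ R

/-- The basis element of the chains corresponding to a cell. -/
noncomputable def el {n : ℕ} (x : G.X n) : Chains G R := Finsupp.single ⟨n, x⟩ 1

/-- The boundary `∂ x = t x - s x` (zero in degree `0`). -/
noncomputable def bdry : Chains G R →ₗ[R] Chains G R :=
  Finsupp.lift _ R _ (fun p =>
    match p with
    | ⟨0, _⟩ => 0
    | ⟨n+1, x⟩ => G.el R (G.t n x) - G.el R (G.s n x))

/-- The Koszul sign operator, multiplying a degree-`n` cell by `(-1)^n`. -/
noncomputable def koszul : Chains G R →ₗ[R] Chains G R :=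
  Finsupp.lift _ R _ (fun p => ((-1 : R)^p.1) • (Finsupp.single p 1 : Chains G R))

/-- The boundary of the tensor square: `∂(a ⊗ b) = ∂a ⊗ b + (-1)^{|a|} a ⊗ ∂b`. -/
noncomputable def bdryTensor :
    Chains G R ⊗[R] Chains G R →ₗ[R] Chains G R ⊗[R] Chains G R :=
  TensorProduct.map (G.bdry R) LinearMap.id + TensorProduct.map (G.koszul R) (G.bdry R)

/-- The signed transposition `T (a ⊗ b) = (-1)^{|a||b|} b ⊗ a`. -/
noncomputable def swapT :
    Chains G R ⊗[R] Chains G R →ₗ[R] Chains G R ⊗[R] Chains G R :=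
  TensorProduct.lift (Finsupp.lift _ R _ (fun p => Finsupp.lift _ R _ (fun q =>
    ((-1 : R)^(p.1 * q.1)) •
      ((Finsupp.single q 1 : Chains G R) ⊗ₜ[R] (Finsupp.single p 1 : Chains G R)))))

/-- The globular coproducts `Δ_k`:  `Δ_k x = 0` if `|x| < k`, `x ⊗ x` if `|x| = k`, and
`t_k x ⊗ x + (-1)^{(|x|+1)k} x ⊗ s_k x` if `k < |x|`. -/
noncomputable def Δ (k : ℕ) : Chains G R →ₗ[R] Chains G R ⊗[R] Chains G R :=
  Finsupp.lift (Chains G R ⊗[R] Chains G R) R (Σ n, G.X n) (fun p =>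
    if h : p.1 < k then (0 : Chains G R ⊗[R] Chains G R)
    else if p.1 = k then (Finsupp.single p 1 : Chains G R) ⊗ₜ[R] (Finsupp.single p 1)
    else
      (G.el R (G.tgt k (Nat.le_of_not_lt h) p.2)) ⊗ₜ[R] (Finsupp.single p 1 : Chains G R)
      + ((-1 : R)^((p.1 + 1) * k)) •
        ((Finsupp.single p 1 : Chains G R) ⊗ₜ[R] (G.el R (G.src k (Nat.le_of_not_lt h) p.2))))

/-- The augmentation `ε`. -/
noncomputable def aug : Chains G R →ₗ[R] R :=
  Finsupp.lift _ R _ (fun p => if p.1 = 0 then (1 : R) else 0)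

end GlobularSet

/-!
Both sides expand to `t x ⊗ x - s x ⊗ x + (-1)^(m+1) x ⊗ t x + (-1)^m x ⊗ s x`: `Δ_{m+1}` kills the
degree-`m` chain `∂x`, and `T` acts on the two terms of `Δ_m x` with the trivial sign
`(-1)^(m(m+1))`, so `(-1)^(m+1) T` turns `(-1)^m x ⊗ s x` into `-s x ⊗ x`.
-/

namespace GlobularSet

variable (G : GlobularSet)

theorem tgt_of_succ {m : ℕ} (h : m ≤ m + 1) (x : G.X (m + 1)) : G.tgt m h x = G.t m x := by
  -- `m + 1 - m` is not definitionally `1`, so the cast has to be generalized away.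
  have key : ∀ (j : ℕ), j = 1 → ∀ (e : m + 1 = m + j) (x : G.X (m + 1)),
      G.tdown j (cast (congrArg G.X e) x) = G.t m x := by
    rintro j rfl e x
    rfl
  exact key _ (by omega) (by omega) x

theorem src_of_succ {m : ℕ} (h : m ≤ m + 1) (x : G.X (m + 1)) : G.src m h x = G.s m x := by
  have key : ∀ (j : ℕ), j = 1 → ∀ (e : m + 1 = m + j) (x : G.X (m + 1)),
      G.sdown j (cast (congrArg G.X e) x) = G.s m x := by
    rintro j rfl e x
    rfl
  exact key _ (by omega) (by omega) x

variable (R : Type) [CommRing R]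

theorem bdry_el_succ {m : ℕ} (x : G.X (m + 1)) :
    G.bdry R (G.el R x) = G.el R (G.t m x) - G.el R (G.s m x) := by
  simp [bdry, el]

theorem koszul_el {n : ℕ} (x : G.X n) : G.koszul R (G.el R x) = (-1 : R) ^ n • G.el R x := by
  simp only [koszul, el, Finsupp.lift_apply, Finsupp.sum_single_index, zero_smul, one_smul]

theorem bdryTensor_el_tmul {n : ℕ} (y : G.X n) (b : Chains G R) :
    G.bdryTensor R (G.el R y ⊗ₜ b)
      = G.bdry R (G.el R y) ⊗ₜ b + (-1 : R) ^ n • (G.el R y ⊗ₜ G.bdry R b) := by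
  simp [bdryTensor, koszul_el, smul_tmul]

theorem swapT_el_tmul_el {a b : ℕ} (y : G.X a) (z : G.X b) :
    G.swapT R (G.el R y ⊗ₜ G.el R z) = (-1 : R) ^ (a * b) • (G.el R z ⊗ₜ G.el R y) := by
  simp [swapT, el]

theorem Δ_el_of_lt {k n : ℕ} (h : n < k) (x : G.X n) : G.Δ R k (G.el R x) = 0 := by
  simp [Δ, el, h]

theorem Δ_el_self {k : ℕ} (x : G.X k) : G.Δ R k (G.el R x) = G.el R x ⊗ₜ G.el R x := by
  simp [Δ, el]

theorem Δ_el_of_gt {k n : ℕ} (h : k < n) (x : G.X n) :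
    G.Δ R k (G.el R x) = G.el R (G.tgt k h.le x) ⊗ₜ G.el R x
      + (-1 : R) ^ ((n + 1) * k) • (G.el R x ⊗ₜ G.el R (G.src k h.le x)) := by
  simp [Δ, el, h.not_gt, h.ne']

theorem Δ_el_succ {m : ℕ} (x : G.X (m + 1)) :
    G.Δ R m (G.el R x) = G.el R (G.t m x) ⊗ₜ G.el R x
      + (-1 : R) ^ m • (G.el R x ⊗ₜ G.el R (G.s m x)) := by
  have hsign : (-1 : R) ^ ((m + 1 + 1) * m) = (-1 : R) ^ m := by
    rw [show (m + 1 + 1) * m = m * (m + 1) + m by ring, pow_add,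
      (Nat.even_mul_succ_self m).neg_one_pow, one_mul]
  rw [Δ_el_of_gt G R (Nat.lt_succ_self m), tgt_of_succ, src_of_succ, hsign]

end GlobularSet

open GlobularSet in
/-- the coherence `∂ Δ_k - (-1)^k Δ_k ∂ = (1 + (-1)^k T) Δ_{k-1}` for the
globular coalgebra in the case `0 < k = n`, for `x` of degree `n = m + 1`. -/
theorem globular_coalgebra_case_k_eq_n
    (G : GlobularSet) (R : Type) [CommRing R] (m : ℕ) (x : G.X (m + 1)) :
    G.bdryTensor R (G.Δ R (m + 1) (G.el R x))
      - ((-1 : R)^(m + 1)) • G.Δ R (m + 1) (G.bdry R (G.el R x))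
    = G.Δ R m (G.el R x) + ((-1 : R)^(m + 1)) • G.swapT R (G.Δ R m (G.el R x)) := by
  have hΔbdry : G.Δ R (m + 1) (G.bdry R (G.el R x)) = 0 := by
    rw [bdry_el_succ, map_sub, Δ_el_of_lt G R (Nat.lt_succ_self m),
      Δ_el_of_lt G R (Nat.lt_succ_self m), sub_self]
  have hswap : (-1 : R) ^ (m * (m + 1)) = 1 := (Nat.even_mul_succ_self m).neg_one_pow
  have hswap' : (-1 : R) ^ ((m + 1) * m) = 1 := by rw [mul_comm, hswap]
  have hsq : (-1 : R) ^ m * (-1 : R) ^ m = 1 := by rw [← mul_pow]; simp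
  rw [hΔbdry, smul_zero, Δ_el_self, bdryTensor_el_tmul, bdry_el_succ, Δ_el_succ,
    map_add, map_smul, swapT_el_tmul_el, swapT_el_tmul_el, hswap, hswap', pow_succ]
  simp only [sub_tmul, tmul_sub, one_smul]
  match_scalars <;> grind
end

section
/- Let σ be the top nondegenerate n-simplex of the standard simplicial n-simplex, and over the integers define σ_i^− recursively by σ_n^− = σ and σ_{i}^− = (∂σ_{i+1}^−)^− (the negative part of the boundary in the canonical basis of injective monotone maps). Then σ_i^− = Σ_{U ∈ P(n, n−i), U^− = ∅} d_{U^+} σ for all 0 ≤ i ≤ n. -/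
open CategoryTheory

/-- For `U = {u₁ < ⋯ < u_k}`, the subset `U⁻ = {uᵢ ∈ U : uᵢ ≢ i mod 2}` (the index `i`
of `u ∈ U` being the number of elements of `U` that are `≤ u`). -/
def Uminus {n : ℕ} (U : Finset (Fin (n+1))) : Finset (Fin (n+1)) :=
  U.filter (fun u => ¬ ((u : ℕ) % 2 = (U.filter (fun v => v ≤ u)).card % 2))

/-- For `U = {u₁ < ⋯ < u_k}`, the subset `U⁺ = {uᵢ ∈ U : uᵢ ≡ i mod 2}`. -/
def Uplus {n : ℕ} (U : Finset (Fin (n+1))) : Finset (Fin (n+1)) :=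
  U.filter (fun u => (u : ℕ) % 2 = (U.filter (fun v => v ≤ u)).card % 2)

lemma Uminus_subset {n : ℕ} (U : Finset (Fin (n+1))) : Uminus U ⊆ U :=
  Finset.filter_subset _ _

lemma Uplus_subset {n : ℕ} (U : Finset (Fin (n+1))) : Uplus U ⊆ U :=
  Finset.filter_subset _ _

/-- The composite face map `d_U = d_{u₁} ⋯ d_{u_k}` as a morphism `[m] ⟶ [n]` of the
simplex category: the unique monotone injection whose image is the complement of `U`. -/
def faceHom {n m : ℕ} (U : Finset (Fin (n+1))) (h : m + U.card = n) :
    (SimplexCategory.mk m ⟶ SimplexCategory.mk n) :=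
  SimplexCategory.mkHom
    (Uᶜ.orderEmbOfFin
      (by rw [Finset.card_compl, Fintype.card_fin]; omega : Uᶜ.card = m + 1)).toOrderHom

/-- The total module of integral chains of the standard `n`-simplex (free on all
monotone maps `[m] → [n]`; the boundary of an injective map only involves injective
maps, so the recursion below takes place among the canonical basis of nondegenerate
simplices). -/
abbrev StdChains (n : ℕ) : Type :=
  (Σ m : ℕ, (SimplexCategory.mk m ⟶ SimplexCategory.mk n)) →₀ ℤ

/-- The simplicial boundary `∂ f = ∑_j (-1)^j (δ j ≫ f)`. -/
noncomputable def stdBdry (n : ℕ) : StdChains n →ₗ[ℤ] StdChains n :=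
  Finsupp.lift (StdChains n) ℤ _ (fun p =>
    match p with
    | ⟨0, _⟩ => 0
    | ⟨m+1, f⟩ => ∑ j : Fin (m + 2),
        ((-1 : ℤ)^(j : ℕ)) •
          (Finsupp.single ⟨m, SimplexCategory.δ j ≫ f⟩ 1 : StdChains n))

/-- The negative part `c⁻` of a chain in the canonical basis, so that `c = c⁺ - c⁻`
with `c⁺`, `c⁻` having nonnegative coordinates. -/
noncomputable def negPart (n : ℕ) (c : StdChains n) : StdChains n :=
  c.mapRange (fun z => -(min z 0)) (by simp)

/-- The chains `σ_{n-r}⁻` of Steiner's recursion: `σ_n⁻ = σ` (the top simplex) and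
`σ_{i}⁻ = (∂ σ_{i+1}⁻)⁻`. -/
noncomputable def sigmaNeg (n : ℕ) : ℕ → StdChains n
  | 0 => Finsupp.single ⟨n, 𝟙 (SimplexCategory.mk n)⟩ 1
  | r+1 => negPart n (stdBdry n (sigmaNeg n r))

/-!
Write `d_U σ` for the face of the top simplex that misses the vertices in `U`. The `j`-th face
of `d_U σ` is `d_{U ∪ {w}} σ` with `w` the `j`-th element of `Uᶜ`, so the coefficient of `d_V σ`
in `∂ (∑_{#U = r, U⁻ = ∅} d_U σ)` is a signed count of the `w ∈ V` with `(V ∖ {w})⁻ = ∅`, the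
sign being `-1` exactly when `w ∈ V⁺`. Adding a new largest element to `V` shows by induction
that this count is `[V⁺ = ∅] - [V⁻ = ∅]`, whose negative part `[V⁻ = ∅]` is Steenrod's formula
one dimension lower.
-/

open Finset

lemma Finset.card_filter_lt_orderEmbOfFin {α : Type*} [LinearOrder α] (s : Finset α) {k : ℕ}
    (h : #s = k) (j : Fin k) : #(s.filter (· < s.orderEmbOfFin h j)) = j := by
  have hfilter :
      s.filter (· < s.orderEmbOfFin h j) = (Iio j).map (s.orderEmbOfFin h).toEmbedding := by
    conv_lhs => enter [2]; rw [← map_orderEmbOfFin_univ s h]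
    rw [filter_map]
    congr 1
    ext i
    simp
  rw [hfilter, card_map, Fin.card_Iio]

lemma Finset.sum_sum_compl_eq_sum_sum_erase {α M : Type*} [Fintype α] [DecidableEq α]
    [AddCommMonoid M] (f : Finset α → α → M) :
    ∑ U, ∑ w ∈ Uᶜ, f U w = ∑ V, ∑ w ∈ V, f (V.erase w) w := by
  rw [sum_sigma', sum_sigma']
  refine sum_bij' (fun x _ => ⟨insert x.2 x.1, x.2⟩) (fun x _ => ⟨x.1.erase x.2, x.2⟩)
    ?_ ?_ ?_ ?_ ?_ <;> simp_all

section

variable {n : ℕ}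

lemma card_filter_le_insert_of_lt {W : Finset (Fin (n+1))} {a x : Fin (n+1)} (hxa : x < a) :
    #((insert a W).filter (· ≤ x)) = #(W.filter (· ≤ x)) := by
  rw [filter_insert, if_neg (not_le.mpr hxa)]

lemma card_filter_le_insert_of_forall_lt {W : Finset (Fin (n+1))} {a : Fin (n+1)}
    (h : ∀ x ∈ W, x < a) : #((insert a W).filter (· ≤ a)) = #W + 1 := by
  have ha : a ∉ W := fun ha => lt_irrefl a (h a ha)
  rw [filter_true_of_mem, card_insert_of_notMem ha]
  intro x hx
  rcases mem_insert.mp hx with rfl | hx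
  exacts [le_rfl, (h x hx).le]

lemma Uplus_insert_of_forall_lt {W : Finset (Fin (n+1))} {a : Fin (n+1)} (h : ∀ x ∈ W, x < a) :
    Uplus (insert a W) =
      if (a : ℕ) % 2 = (#W + 1) % 2 then insert a (Uplus W) else Uplus W := by
  unfold Uplus
  rw [filter_insert, card_filter_le_insert_of_forall_lt h,
    filter_congr fun x hx => by rw [card_filter_le_insert_of_lt (h x hx)]]

lemma Uminus_insert_of_forall_lt {W : Finset (Fin (n+1))} {a : Fin (n+1)} (h : ∀ x ∈ W, x < a) :
    Uminus (insert a W) =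
      if (a : ℕ) % 2 = (#W + 1) % 2 then Uminus W else insert a (Uminus W) := by
  unfold Uminus
  rw [filter_insert, card_filter_le_insert_of_forall_lt h,
    filter_congr fun x hx => by rw [card_filter_le_insert_of_lt (h x hx)]]
  simp only [ite_not]

lemma Uminus_erase_insert_of_forall_lt {W : Finset (Fin (n+1))} {a w : Fin (n+1)}
    (h : ∀ x ∈ W, x < a) (hw : w ∈ W) :
    Uminus ((insert a W).erase w) =
      if (a : ℕ) % 2 = #W % 2 then Uminus (W.erase w) else insert a (Uminus (W.erase w)) := by
  rw [erase_insert_of_ne (h w hw).ne',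
    Uminus_insert_of_forall_lt fun x hx => h x (mem_of_mem_erase hx),
    card_erase_add_one hw]

lemma Uplus_union_Uminus (V : Finset (Fin (n+1))) : Uplus V ∪ Uminus V = V :=
  filter_union_filter_not_eq _ _

def bdryCoeff (V : Finset (Fin (n+1))) : ℤ :=
  ∑ w ∈ V with Uminus (V.erase w) = ∅, if w ∈ Uplus V then -1 else 1

theorem bdryCoeff_eq (V : Finset (Fin (n+1))) :
    bdryCoeff V = (if Uplus V = ∅ then 1 else 0) - (if Uminus V = ∅ then 1 else 0) := by
  induction V using Finset.induction_on_max with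
  | empty => simp [bdryCoeff, Uplus, Uminus]
  | insert a W h ih =>
    have ha : a ∉ W := fun ha => lt_irrefl a (h a ha)
    rw [bdryCoeff, sum_filter, sum_insert ha, erase_insert ha] at *
    by_cases hpar : (a : ℕ) % 2 = (#W + 1) % 2
    · have hUp : Uplus (insert a W) = insert a (Uplus W) := by
        rw [Uplus_insert_of_forall_lt h, if_pos hpar]
      have hUm : Uminus (insert a W) = Uminus W := by
        rw [Uminus_insert_of_forall_lt h, if_pos hpar]
      have hW : ∀ w ∈ W, Uminus ((insert a W).erase w) ≠ ∅ := fun w hw => by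
        rw [Uminus_erase_insert_of_forall_lt h hw, if_neg (by omega)]
        exact insert_ne_empty _ _
      rw [sum_eq_zero fun w hw => if_neg (hW w hw), hUp, hUm]
      split_ifs <;> simp_all
    · have hUp : Uplus (insert a W) = Uplus W := by
        rw [Uplus_insert_of_forall_lt h, if_neg hpar]
      have hUm : Uminus (insert a W) = insert a (Uminus W) := by
        rw [Uminus_insert_of_forall_lt h, if_neg hpar]
      have hW : ∀ w ∈ W, Uminus ((insert a W).erase w) = Uminus (W.erase w) := fun w hw => by
        rw [Uminus_erase_insert_of_forall_lt h hw, if_pos (by omega)]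
      have haUp : a ∉ Uplus W := fun haUp => ha (Uplus_subset W haUp)
      rw [sum_congr rfl fun w hw => by rw [hW w hw], hUp, ih, hUm]
      split_ifs <;> simp_all

lemma card_filter_lt_compl_erase_add_card_filter_le {V : Finset (Fin (n+1))} {w : Fin (n+1)}
    (hw : w ∈ V) : #((V.erase w)ᶜ.filter (· < w)) + #(V.filter (· ≤ w)) = w + 1 := by
  have hlt : (V.erase w)ᶜ.filter (· < w) = (Iic w).filter (· ∉ V) := by
    ext x
    rcases eq_or_ne x w with rfl | hxw
    · simp [hw]
    · simp [hxw, lt_iff_le_and_ne, and_comm]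
  have hle : V.filter (· ≤ w) = (Iic w).filter (· ∈ V) := by
    ext x
    simp [and_comm]
  rw [hlt, hle, add_comm, card_filter_add_card_filter_not, Fin.card_Iic]

lemma neg_one_pow_card_filter_lt_compl_erase {V : Finset (Fin (n+1))} {w : Fin (n+1)}
    (hw : w ∈ V) :
    (-1 : ℤ) ^ #((V.erase w)ᶜ.filter (· < w)) = if w ∈ Uplus V then -1 else 1 := by
  have hcard := card_filter_lt_compl_erase_add_card_filter_le hw
  simp only [Uplus, mem_filter, hw, true_and]
  split_ifs with h
  · exact Odd.neg_one_pow (Nat.odd_iff.mpr (by omega))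
  · exact Even.neg_one_pow (Nat.even_iff.mpr (by omega))

lemma neg_min_bdryCoeff_zero {V : Finset (Fin (n+1))} (hV : V.Nonempty) :
    -min (bdryCoeff V) 0 = if Uminus V = ∅ then 1 else 0 := by
  have hboth : ¬ (Uplus V = ∅ ∧ Uminus V = ∅) := fun ⟨hp, hm⟩ => by
    have hunion := Uplus_union_Uminus V
    rw [hp, hm, empty_union] at hunion
    exact hV.ne_empty hunion.symm
  rw [bdryCoeff_eq]
  split_ifs <;> simp_all

lemma eq_of_sigmaMk_faceHom_eq {m m' : ℕ} {U V : Finset (Fin (n+1))} (hU : m + #U = n)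
    (hV : m' + #V = n)
    (h : (⟨m, faceHom U hU⟩ : Σ k : ℕ, (SimplexCategory.mk k ⟶ SimplexCategory.mk n)) =
      ⟨m', faceHom V hV⟩) : U = V := by
  obtain ⟨rfl, h⟩ := Sigma.mk.inj_iff.mp h
  have hrange := congrArg (fun f : SimplexCategory.mk m ⟶ SimplexCategory.mk n =>
    Set.range f.toOrderHom) (eq_of_heq h)
  simpa [faceHom, SimplexCategory.mkHom, Finset.range_orderEmbOfFin] using hrange

lemma eq_faceHom {m : ℕ} {U : Finset (Fin (n+1))} (h : m + #U = n)
    (f : SimplexCategory.mk m ⟶ SimplexCategory.mk n) (hmono : StrictMono f.toOrderHom)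
    (hU : ∀ x, f.toOrderHom x ∉ U) : f = faceHom U h := by
  have hc : #Uᶜ = m + 1 := by rw [card_compl, Fintype.card_fin]; omega
  ext x : 3
  exact congrFun (orderEmbOfFin_unique hc (fun x => mem_compl.mpr (hU x)) hmono) x

lemma faceHom_empty (h : n + #(∅ : Finset (Fin (n+1))) = n) :
    faceHom ∅ h = 𝟙 (SimplexCategory.mk n) :=
  (eq_faceHom h (𝟙 _) (fun _ _ hab => hab) (fun _ => notMem_empty _)).symm

lemma δ_comp_faceHom {m : ℕ} {U V : Finset (Fin (n+1))} (hU : m + 1 + #U = n)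
    (hc : #Uᶜ = m + 2) (j : Fin (m + 2)) (hV : m + #V = n)
    (hUV : V = insert (Uᶜ.orderEmbOfFin hc j) U) :
    SimplexCategory.δ j ≫ faceHom U hU = faceHom V hV := by
  subst hUV
  set e := Uᶜ.orderEmbOfFin hc
  have hf : ∀ x, (SimplexCategory.δ j ≫ faceHom U hU).toOrderHom x = e (j.succAbove x) :=
    fun x => rfl
  refine eq_faceHom hV _ ?_ fun x => ?_
  · intro a b hab
    simpa only [hf] using e.strictMono (Fin.strictMono_succAbove j hab)
  · rw [hf, mem_insert, not_or]
    exact ⟨fun hx => j.succAbove_ne x (e.injective hx),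
      mem_compl.mp (orderEmbOfFin_mem Uᶜ hc _)⟩

/-- `d_U σ` as a chain; no face misses every vertex, and `d_U σ = 0` for `U = univ`. -/
noncomputable def faceSimplex (n : ℕ) (U : Finset (Fin (n+1))) : StdChains n :=
  if h : #U ≤ n then Finsupp.single ⟨n - #U, faceHom U (by omega)⟩ 1 else 0

lemma faceSimplex_eq {m : ℕ} {U : Finset (Fin (n+1))} (h : m + #U = n) :
    faceSimplex n U = Finsupp.single ⟨m, faceHom U h⟩ 1 := by
  obtain rfl : m = n - #U := by omega
  exact dif_pos (by omega)

lemma faceSimplex_of_lt_card {U : Finset (Fin (n+1))} (h : n < #U) : faceSimplex n U = 0 :=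
  dif_neg (by omega)

lemma faceSimplex_empty : faceSimplex n ∅ = Finsupp.single ⟨n, 𝟙 (SimplexCategory.mk n)⟩ 1 := by
  rw [faceSimplex_eq (m := n) (by simp), faceHom_empty]

lemma faceSimplex_apply_eq_ite {U V : Finset (Fin (n+1))}
    {p : Σ m : ℕ, (SimplexCategory.mk m ⟶ SimplexCategory.mk n)} (hV : faceSimplex n V p ≠ 0) :
    faceSimplex n U p = if U = V then 1 else 0 := by
  have hVn : #V ≤ n := by
    by_contra hlt
    exact hV (by rw [faceSimplex_of_lt_card (by omega)]; rfl)
  rw [faceSimplex_eq (m := n - #V) (by omega), Finsupp.single_apply_ne_zero] at hV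
  obtain ⟨rfl, -⟩ := hV
  split_ifs with hUV
  · subst hUV
    rw [faceSimplex_eq (m := n - #U) (by omega), Finsupp.single_eq_same]
  · by_cases hUn : #U ≤ n
    · rw [faceSimplex_eq (m := n - #U) (by omega), Finsupp.single_apply,
        if_neg fun h => hUV (eq_of_sigmaMk_faceHom_eq _ _ h)]
    · rw [faceSimplex_of_lt_card (by omega), Finsupp.zero_apply]

lemma stdBdry_single_succ {m : ℕ} (f : SimplexCategory.mk (m+1) ⟶ SimplexCategory.mk n) :
    stdBdry n (Finsupp.single ⟨m+1, f⟩ 1) =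
      ∑ j : Fin (m + 2), (-1 : ℤ) ^ (j : ℕ) • Finsupp.single ⟨m, SimplexCategory.δ j ≫ f⟩ 1 := by
  rw [stdBdry, Finsupp.lift_apply, Finsupp.sum_single_index (by simp), one_smul]

lemma stdBdry_single_zero (f : SimplexCategory.mk 0 ⟶ SimplexCategory.mk n) :
    stdBdry n (Finsupp.single ⟨0, f⟩ 1) = 0 := by
  rw [stdBdry, Finsupp.lift_apply, Finsupp.sum_single_index (by simp), one_smul]

lemma stdBdry_faceSimplex (U : Finset (Fin (n+1))) :
    stdBdry n (faceSimplex n U) =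
      ∑ w ∈ Uᶜ, (-1 : ℤ) ^ #(Uᶜ.filter (· < w)) • faceSimplex n (insert w U) := by
  by_cases hlt : #U < n
  · obtain ⟨m, hm⟩ : ∃ m, m + 1 + #U = n := ⟨n - #U - 1, by omega⟩
    have hc : #Uᶜ = m + 2 := by rw [card_compl, Fintype.card_fin]; omega
    have hreindex := sum_map univ (Uᶜ.orderEmbOfFin hc).toEmbedding
      fun w => (-1 : ℤ) ^ #(Uᶜ.filter (· < w)) • faceSimplex n (insert w U)
    rw [map_orderEmbOfFin_univ] at hreindex
    rw [hreindex, faceSimplex_eq hm, stdBdry_single_succ]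
    refine sum_congr rfl fun j _ => ?_
    have hj : Uᶜ.orderEmbOfFin hc j ∉ U := mem_compl.mp (orderEmbOfFin_mem _ hc j)
    have hV : m + #(insert (Uᶜ.orderEmbOfFin hc j) U) = n := by
      rw [card_insert_of_notMem hj]; omega
    rw [RelEmbedding.coe_toEmbedding, card_filter_lt_orderEmbOfFin, faceSimplex_eq hV,
      δ_comp_faceHom hm hc j hV rfl]
  · have hfaces : ∀ w ∈ Uᶜ, faceSimplex n (insert w U) = 0 := fun w hw => by
      rw [faceSimplex_of_lt_card (by rw [card_insert_of_notMem (mem_compl.mp hw)]; omega)]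
    rw [sum_eq_zero fun w hw => by rw [hfaces w hw, smul_zero]]
    rcases (not_lt.mp hlt).eq_or_lt with hU | hU
    · rw [faceSimplex_eq (m := 0) (by omega), stdBdry_single_zero]
    · rw [faceSimplex_of_lt_card hU, map_zero]

lemma negPart_sum_smul_faceSimplex (c : Finset (Fin (n+1)) → ℤ) :
    negPart n (∑ V, c V • faceSimplex n V) = ∑ V, (-min (c V) 0) • faceSimplex n V := by
  ext p
  simp only [_root_.negPart, Finsupp.mapRange_apply, Finsupp.finsetSum_apply, Finsupp.smul_apply,
    smul_eq_mul]
  by_cases hp : ∃ V, faceSimplex n V p ≠ 0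
  · obtain ⟨V, hV⟩ := hp
    simp [faceSimplex_apply_eq_ite hV]
  · push Not at hp
    simp [hp]

noncomputable def steenrodChain (n r : ℕ) : StdChains n :=
  ∑ U with #U = r ∧ Uminus U = ∅, faceSimplex n U

lemma stdBdry_steenrodChain (r : ℕ) :
    stdBdry n (steenrodChain n r) =
      ∑ V, (if #V = r + 1 then bdryCoeff V else 0) • faceSimplex n V := by
  calc stdBdry n (steenrodChain n r)
      = ∑ U, ∑ w ∈ Uᶜ, (if #U = r ∧ Uminus U = ∅ then (-1 : ℤ) ^ #(Uᶜ.filter (· < w)) else 0) •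
          faceSimplex n (insert w U) := by
        rw [steenrodChain, map_sum, sum_filter]
        refine sum_congr rfl fun U _ => ?_
        split_ifs <;> simp [stdBdry_faceSimplex]
    _ = ∑ V, ∑ w ∈ V, (if #(V.erase w) = r ∧ Uminus (V.erase w) = ∅ then
          (-1 : ℤ) ^ #((V.erase w)ᶜ.filter (· < w)) else 0) • faceSimplex n V := by
        rw [sum_sum_compl_eq_sum_sum_erase]
        exact sum_congr rfl fun V _ => sum_congr rfl fun w hw => by rw [insert_erase hw]
    _ = _ := by
        refine sum_congr rfl fun V _ => ?_
        rw [← sum_smul]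
        congr 1
        split_ifs with hV
        · rw [bdryCoeff, sum_filter]
          refine sum_congr rfl fun w hw => ?_
          rw [card_erase_of_mem hw, hV, add_tsub_cancel_right,
            neg_one_pow_card_filter_lt_compl_erase hw]
          simp only [true_and]
        · refine sum_eq_zero fun w hw => if_neg fun h => hV ?_
          rw [← card_erase_add_one hw, h.1]

end

theorem sigmaNeg_eq_steenrodChain (n r : ℕ) : sigmaNeg n r = steenrodChain n r := by
  induction r with
  | zero =>
    rw [sigmaNeg, steenrodChain, ← faceSimplex_empty, sum_filter,
      sum_eq_single ∅ (fun U _ hU => if_neg fun h => hU (card_eq_zero.mp h.1)) (by simp),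
      if_pos ⟨card_empty, by simp [Uminus]⟩]
  | succ r ih =>
    rw [sigmaNeg, ih, stdBdry_steenrodChain, negPart_sum_smul_faceSimplex, steenrodChain,
      sum_filter]
    refine sum_congr rfl fun V _ => ?_
    by_cases hV : #V = r + 1
    · rw [if_pos hV, neg_min_bdryCoeff_zero (card_pos.mp (by omega))]
      simp [hV]
    · simp [hV]

/-- for the top simplex `σ` of the standard `n`-simplex, the recursively
defined chains `σ_i⁻` (`σ_n⁻ = σ`, `σ_i⁻ = (∂ σ_{i+1}⁻)⁻`) are given by Steenrod's
formula: `σ_{n-r}⁻ = ∑_{U ∈ P(n,r), U⁻ = ∅} d_{U⁺} σ` for all `r ≤ n` (note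
`U⁺ = U` when `U⁻ = ∅`). -/
theorem sigmaNeg_eq_steenrod_sum (n : ℕ) (r : ℕ) (hr : r ≤ n) :
    sigmaNeg n r =
      ∑ U : Finset (Fin (n+1)),
        if h : U.card = r ∧ Uminus U = ∅ then
          Finsupp.single
            (⟨n - r, faceHom U (by obtain ⟨h1, -⟩ := h; omega : (n - r) + U.card = n)⟩ :
              Σ m : ℕ, (SimplexCategory.mk m ⟶ SimplexCategory.mk n))
            (1 : ℤ)
        else 0 := by
  rw [sigmaNeg_eq_steenrodChain, steenrodChain, sum_filter]
  refine sum_congr rfl fun U _ => ?_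
  split_ifs with h
  · exact faceSimplex_eq _
  · rfl
end

section
/- The assignment X ↦ (C_•(X;R), Δ, ε) is faithful on globular sets: if two morphisms F, G : X → Y of globular sets induce the same coalgebra map C_•(X;R) → C_•(Y;R) (equivalently, the same chain map), and R is nontrivial, then F = G. -/
open TensorProduct

/-- A morphism of globular sets: a family of maps commuting with sources, targets
and identities. -/
structure GlobularMap (GX GY : GlobularSet) where
  f : ∀ n, GX.X n → GY.X n
  comm_s : ∀ n (x : GX.X (n+1)), f n (GX.s n x) = GY.s n (f (n+1) x)
  comm_t : ∀ n (x : GX.X (n+1)), f n (GX.t n x) = GY.t n (f (n+1) x)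
  comm_i : ∀ n (x : GX.X n), f (n+1) (GX.i n x) = GY.i n (f n x)

namespace GlobularSet

/-- The chain map induced by a morphism of globular sets. -/
noncomputable def chainMap {GX GY : GlobularSet} (R : Type) [CommRing R]
    (F : GlobularMap GX GY) : Chains GX R →ₗ[R] Chains GY R :=
  Finsupp.lift (Chains GY R) R (Σ n, GX.X n)
    (fun p => Finsupp.single ⟨p.1, F.f p.1 p.2⟩ 1)

/-- The submodule of chains spanned by degenerate cells; the quotient by it is the
complex `C_n(X) = R{X_n} / R{i_n(X_{n-1})}`. -/
noncomputable def degenerate (G : GlobularSet) (R : Type) [CommRing R] :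
    Submodule R (Chains G R) :=
  Submodule.span R
    (Set.range (fun p : Σ n, G.X n =>
      (Finsupp.single (⟨p.1 + 1, G.i p.1 p.2⟩ : Σ n, G.X n) 1 : Chains G R)))

end GlobularSet

theorem Finsupp.mem_of_single_sub_single_mem_supported {α R : Type*} [Ring R] [Nontrivial R]
    {s : Set α} {a b : α} (hab : a ≠ b)
    (h : Finsupp.single a (1 : R) - Finsupp.single b 1 ∈ Finsupp.supported R R s) : a ∈ s := by
  refine (Finsupp.mem_supported R _).mp h (Finsupp.mem_support_iff.mpr ?_)
  simp [hab.symm]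

@[ext]
theorem GlobularMap.ext {GX GY : GlobularSet} {F G : GlobularMap GX GY}
    (h : ∀ n x, F.f n x = G.f n x) : F = G := by
  cases F; cases G
  congr
  funext n x
  exact h n x

namespace GlobularSet

def degenerateCells (G : GlobularSet) : Set (Σ n, G.X n) :=
  Set.range fun p : Σ n, G.X n => ⟨p.1 + 1, G.i p.1 p.2⟩

theorem degenerate_eq_supported (G : GlobularSet) (R : Type) [CommRing R] :
    degenerate G R = Finsupp.supported R R G.degenerateCells := by
  rw [Finsupp.supported_eq_span_single, degenerate, degenerateCells, ← Set.range_comp]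
  rfl

theorem notMem_degenerateCells_zero (G : GlobularSet) (y : G.X 0) :
    (⟨0, y⟩ : Σ n, G.X n) ∉ G.degenerateCells := by
  rintro ⟨p, hp⟩
  exact Nat.succ_ne_zero p.1 (Sigma.mk.inj_iff.mp hp).1

theorem eq_i_s_of_mem_degenerateCells (G : GlobularSet) {m : ℕ} {y : G.X (m + 1)}
    (hy : (⟨m + 1, y⟩ : Σ n, G.X n) ∈ G.degenerateCells) : y = G.i m (G.s m y) := by
  obtain ⟨⟨k, z⟩, hz⟩ := hy
  obtain ⟨hkm, hzy⟩ := Sigma.mk.inj_iff.mp hz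
  obtain rfl : k = m := Nat.succ_injective hkm
  obtain rfl := eq_of_heq hzy
  rw [G.s_i]

theorem chainMap_single {GX GY : GlobularSet} (R : Type) [CommRing R] (F : GlobularMap GX GY)
    {n : ℕ} (x : GX.X n) :
    chainMap R F (Finsupp.single ⟨n, x⟩ 1) = Finsupp.single ⟨n, F.f n x⟩ 1 := by
  simp [chainMap]

theorem mem_degenerateCells_of_chainMap_eq {GX GY : GlobularSet} {R : Type} [CommRing R]
    [Nontrivial R] {F G : GlobularMap GX GY}
    (h : (degenerate GY R).mkQ.comp (chainMap R F) = (degenerate GY R).mkQ.comp (chainMap R G))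
    {n : ℕ} {x : GX.X n} (hne : F.f n x ≠ G.f n x) :
    (⟨n, F.f n x⟩ : Σ n, GY.X n) ∈ GY.degenerateCells := by
  have hx := LinearMap.congr_fun h (Finsupp.single ⟨n, x⟩ 1)
  simp only [LinearMap.comp_apply, Submodule.mkQ_apply, Submodule.Quotient.eq,
    chainMap_single, degenerate_eq_supported] at hx
  refine Finsupp.mem_of_single_sub_single_mem_supported (fun hFG => hne ?_) hx
  exact eq_of_heq (Sigma.mk.inj_iff.mp hFG).2

end GlobularSet

open GlobularSet in
/-- the functor of chains is faithful on globular sets: if two morphisms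
`F, G : X → Y` of globular sets induce the same chain map
`C_•(X; R) → C_•(Y; R) = R{Y_•}/R{i(Y_•)}` (equivalently, the same coalgebra map) and
`R` is nontrivial, then `F = G`. -/
theorem chains_faithful_on_globular_sets
    (GX GY : GlobularSet) (R : Type) [CommRing R] [Nontrivial R]
    (F G : GlobularMap GX GY)
    (h : (degenerate GY R).mkQ.comp (chainMap R F) =
         (degenerate GY R).mkQ.comp (chainMap R G)) :
    F = G := by
  ext n x
  induction n with
  | zero =>
    by_contra hne
    exact notMem_degenerateCells_zero GY _ (mem_degenerateCells_of_chainMap_eq h hne)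
  | succ m ih =>
    by_contra hne
    have hF := eq_i_s_of_mem_degenerateCells GY (mem_degenerateCells_of_chainMap_eq h hne)
    have hG := eq_i_s_of_mem_degenerateCells GY
      (mem_degenerateCells_of_chainMap_eq h.symm (Ne.symm hne))
    -- a degenerate cell `i y` is recovered from its source `y`, where F and G agree
    refine hne ?_
    rw [hF, hG, ← F.comm_s, ← G.comm_s, ih]
end
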